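/- arXiv:1503.03020 — 11 statements merged into one kernel-verified Lean document; each statement's English description precedes it below -/
import Mathlib

section
/- For all real x ≥ 3, one has exp(1/x − 1/(24x⁴) + 7/(360x⁶)) − 1 < ψ'(x), where ψ' is the trigamma function. -/
open Real Filter Topology

noncomputable def digamma (x : ℝ) : ℝ := deriv (fun t : ℝ => Real.log (Real.Gamma t)) x

noncomputable def trigamma (x : ℝ) : ℝ := ∑' n : ℕ, 1 / (x + n) ^ 2

noncomputable def Faux (t : ℝ) : ℝ :=
  1/t + 1/(2*t^2) + 1/(6*t^3) - 1/(30*t^5) + 1/(42*t^7) - 1/(30*t^9)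

lemma Faux_sub_pos (t : ℝ) (ht : 3 ≤ t) : 0 < Faux t - Faux (t+1) := by
  have h0 : (0:ℝ) < t := by linarith
  have h1 : (0:ℝ) < t + 1 := by linarith
  obtain ⟨s, hs, rfl⟩ : ∃ s, 0 ≤ s ∧ t = s + 3 := ⟨t - 3, by linarith, by ring⟩
  have key : Faux (s+3) - Faux (s+3+1) =
      (120394545221 + 551809282647*s + 1183882538525*s^2 + 1578231739119*s^3 + 1463213412911*s^4 + 1000396289445*s^5 + 521756766545*s^6 + 211752347520*s^7 + 67584184920*s^8 + 17020249470*s^9 + 3370929030*s^10 + 519528870*s^11 + 61082910*s^12 + 5296410*s^13 + 319410*s^14 + 11970*s^15 + 210*s^16) / (210 * (s+3)^9 * (s+3+1)^9) := by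
    unfold Faux
    rw [eq_div_iff (by positivity)]
    field_simp
    ring
  rw [key]
  apply div_pos _ (by positivity)
  have p1 := pow_nonneg hs 1
  have p2 := pow_nonneg hs 2
  have p3 := pow_nonneg hs 3
  have p4 := pow_nonneg hs 4
  have p5 := pow_nonneg hs 5
  have p6 := pow_nonneg hs 6
  have p7 := pow_nonneg hs 7
  have p8 := pow_nonneg hs 8
  have p9 := pow_nonneg hs 9
  have p10 := pow_nonneg hs 10
  have p11 := pow_nonneg hs 11
  have p12 := pow_nonneg hs 12
  have p13 := pow_nonneg hs 13
  have p14 := pow_nonneg hs 14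
  have p15 := pow_nonneg hs 15
  have p16 := pow_nonneg hs 16
  have hs1 : (0:ℝ) ≤ s := hs
  nlinarith [p1, p2, p3, p4, p5, p6, p7, p8, p9, p10, p11, p12, p13, p14, p15, p16]

lemma Faux_sub_lt (t : ℝ) (ht : 3 ≤ t) : Faux t - Faux (t+1) < 1/t^2 := by
  have h0 : (0:ℝ) < t := by linarith
  have h1 : (0:ℝ) < t + 1 := by linarith
  obtain ⟨s, hs, rfl⟩ : ∃ s, 0 ≤ s ∧ t = s + 3 := ⟨t - 3, by linarith, by ring⟩
  rw [← sub_pos]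
  have key : 1/(s+3)^2 - (Faux (s+3) - Faux (s+3+1)) =
      (329659 + 560553*s + 397795*s^2 + 150801*s^3 + 32209*s^4 + 3675*s^5 + 175*s^6) / (210 * (s+3)^9 * (s+3+1)^9) := by
    unfold Faux
    rw [eq_div_iff (by positivity)]
    field_simp
    ring
  rw [key]
  apply div_pos _ (by positivity)
  have p1 := pow_nonneg hs 1
  have p2 := pow_nonneg hs 2
  have p3 := pow_nonneg hs 3
  have p4 := pow_nonneg hs 4
  have p5 := pow_nonneg hs 5
  have p6 := pow_nonneg hs 6
  have p7 := pow_nonneg hs 7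
  have p8 := pow_nonneg hs 8
  have p9 := pow_nonneg hs 9
  have p10 := pow_nonneg hs 10
  have p11 := pow_nonneg hs 11
  have p12 := pow_nonneg hs 12
  have p13 := pow_nonneg hs 13
  have p14 := pow_nonneg hs 14
  have p15 := pow_nonneg hs 15
  have p16 := pow_nonneg hs 16
  nlinarith [p1, p2, p3, p4, p5, p6, p7, p8, p9, p10, p11, p12, p13, p14, p15, p16]

lemma Faux_tendsto : Tendsto Faux atTop (𝓝 0) := by
  have key : ∀ (c : ℝ) (k : ℕ), k ≠ 0 → Tendsto (fun t : ℝ => 1/(c*t^k)) atTop (𝓝 0) := by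
    intro c k hk
    have h := ((tendsto_pow_atTop hk).inv_tendsto_atTop).const_mul c⁻¹
    rw [mul_zero] at h
    refine h.congr fun t => ?_
    simp only [Pi.inv_apply]
    rw [one_div, mul_inv]
  have h := ((((((key 1 1 one_ne_zero).add (key 2 2 two_ne_zero)).add
      (key 6 3 three_ne_zero)).sub (key 30 5 (by norm_num))).add
      (key 42 7 (by norm_num))).sub (key 30 9 (by norm_num)))
  norm_num at h
  refine h.congr fun t => ?_
  simp only [Faux]
  ring

lemma Faux_lt_trigamma (x : ℝ) (hx : 3 ≤ x) : Faux x < trigamma x := by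
  have hx0 : (0:ℝ) < x := by linarith
  set g : ℕ → ℝ := fun n => Faux (x + n) with hg
  set f : ℕ → ℝ := fun n => g n - g (n+1) with hf
  have hxn : ∀ n : ℕ, 3 ≤ x + n := fun n => by
    have : (0:ℝ) ≤ n := Nat.cast_nonneg n
    linarith
  have hfe : ∀ n : ℕ, f n = Faux (x+n) - Faux ((x+n)+1) := by
    intro n
    simp only [hf, hg]
    push_cast
    ring_nf
  have hfpos : ∀ n, 0 ≤ f n := fun n => by
    rw [hfe n]; exact le_of_lt (Faux_sub_pos _ (hxn n))
  have hfle : ∀ n : ℕ, f n ≤ 1/(x+n)^2 := fun n => by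
    rw [hfe n]; exact le_of_lt (Faux_sub_lt _ (hxn n))
  have hf0 : f 0 < 1/(x+(0:ℕ))^2 := by
    rw [hfe 0]; exact Faux_sub_lt _ (hxn 0)
  have hsumg : Summable (fun n : ℕ => 1/(x+n)^2) := by
    have hbase : Summable (fun n : ℕ => 1/((n:ℝ)+1)^2) := by
      have h2 : Summable (fun n : ℕ => 1/(n:ℝ)^2) := summable_one_div_nat_pow.mpr one_lt_two
      have := (summable_nat_add_iff 1).mpr h2
      refine this.congr fun n => ?_
      push_cast
      ring_nf
    refine Summable.of_nonneg_of_le (fun n => by positivity) (fun n => ?_) hbase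
    have h1 : (0:ℝ) < (n:ℝ)+1 := by positivity
    have h2 : (n:ℝ)+1 ≤ x+n := by
      have := hxn n; linarith
    gcongr
  have htend : Tendsto (fun n : ℕ => g n) atTop (𝓝 0) := by
    have hcomp : Tendsto (fun n : ℕ => x + (n:ℝ)) atTop atTop :=
      tendsto_atTop_add_const_left atTop x tendsto_natCast_atTop_atTop
    exact Faux_tendsto.comp hcomp
  have hhs : HasSum f (Faux x) := by
    rw [hasSum_iff_tendsto_nat_of_nonneg hfpos]
    have heq : ∀ N : ℕ, ∑ i ∈ Finset.range N, f i = g 0 - g N := fun N =>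
      Finset.sum_range_sub' g N
    have : Tendsto (fun N : ℕ => g 0 - g N) atTop (𝓝 (g 0 - 0)) :=
      (tendsto_const_nhds).sub htend
    rw [sub_zero] at this
    have hg0 : g 0 = Faux x := by simp [hg]
    rw [← hg0]
    exact this.congr fun N => (heq N).symm
  have : Faux x = ∑' n, f n := hhs.tsum_eq.symm
  rw [this, trigamma]
  exact Summable.tsum_lt_tsum_of_nonneg hfpos hfle hf0 hsumg

set_option maxHeartbeats 4000000 in
theorem stmt_2 (x : ℝ) (hx : 3 ≤ x) :
    Real.exp (1/x - 1/(24*x^4) + 7/(360*x^6)) - 1 < trigamma x := by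
  have hx0 : (0:ℝ) < x := by linarith
  set u : ℝ := 1/x - 1/(24*x^4) + 7/(360*x^6) with hu
  have hupos : 0 < u := by
    rw [hu]
    have e : 1/x - 1/(24*x^4) + 7/(360*x^6) = (360*x^5 - 15*x^2 + 7)/(360*x^6) := by
      field_simp
      ring
    rw [e]
    apply div_pos _ (by positivity)
    have h3 : (27:ℝ) ≤ x^3 := by nlinarith
    nlinarith [mul_nonneg (pow_pos hx0 2).le (show (0:ℝ) ≤ x^3 - 27 by linarith)]
  have hule : u ≤ 1 := by
    rw [hu]
    have h1 : 1/x ≤ 1/3 := by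
      rw [div_le_div_iff₀ hx0 (by norm_num)]; linarith
    have h2 : 7/(360*x^6) ≤ 1/(24*x^4) := by
      rw [div_le_div_iff₀ (by positivity) (by positivity)]
      nlinarith [mul_pos (pow_pos hx0 4) (show (0:ℝ) < 360*x^2 - 168 by nlinarith)]
    linarith
  have hexp : Real.exp u ≤ 1 + u + u^2/2 + u^3/6 + u^4/24 + u^5/120 + u^6/720 + u^7/4410 := by
    have h := Real.exp_bound' (le_of_lt hupos) hule (n := 7) (by norm_num)
    have hsum : (∑ m ∈ Finset.range 7, u ^ m / m.factorial) =
        1 + u + u^2/2 + u^3/6 + u^4/24 + u^5/120 + u^6/720 := by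
      simp [Finset.sum_range_succ, Nat.factorial]
    rw [hsum] at h
    norm_num [Nat.factorial] at h
    linarith
  set v : ℝ := 1/x with hv
  have hv0 : 0 < v := by positivity
  have hnn : (0:ℝ) ≤ 1 - 3*v := by
    rw [hv, mul_one_div, sub_nonneg, div_le_one hx0]
    linarith
  have hu' : u = v - v^4/24 + 7*v^6/360 := by
    rw [hu, hv]
    field_simp
  have hF : Faux x = v + v^2/2 + v^3/6 - v^5/30 + v^7/42 - v^9/30 := by
    rw [hv]
    unfold Faux
    field_simp
  have hkey : 1 + u + u^2/2 + u^3/6 + u^4/24 + u^5/120 + u^6/720 + u^7/4410 - 1 < Faux x := by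
    rw [hu', hF, ← sub_pos]
    have hid : v + v^2/2 + v^3/6 - v^5/30 + v^7/42 - v^9/30 -
        (1 + (v - v^4/24 + 7*v^6/360) + (v - v^4/24 + 7*v^6/360)^2/2 + (v - v^4/24 + 7*v^6/360)^3/6
          + (v - v^4/24 + 7*v^6/360)^4/24 + (v - v^4/24 + 7*v^6/360)^5/120
          + (v - v^4/24 + 7*v^6/360)^6/720 + (v - v^4/24 + 7*v^6/360)^7/4410 - 1) =
        (2640165622292229676943732543243/13183058306250000) * (v^42 * (1-3*v)^0) + (26401668148975099705056561389/10462744687500) * (v^41 * (1-3*v)^1) + (30806790888700627826095320271261/2008846980000000) * (v^40 * (1-3*v)^2) + (892019514239518098056168576599/14880348000000) * (v^39 * (1-3*v)^3) + (40365260079541429226326823220407/238085568000000) * (v^38 * (1-3*v)^4) + (247715071608177687244384024571131/669615660000000) * (v^37 * (1-3*v)^5) + (111145278829716620153824855435130033/171421608960000000) * (v^36 * (1-3*v)^6) + (25018698789231565946561730261721591/26665583616000000) * (v^35 * (1-3*v)^7) + (5807397552578819453186006629611061/5079158784000000) * (v^34 * (1-3*v)^8) + (604875934698283111088655388278217/507915878400000)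 * (v^33 * (1-3*v)^9) + (21783822726641129371145531951711521/20316635136000000) * (v^32 * (1-3*v)^10) + (5701181503059885782081639882604641/6772211712000000) * (v^31 * (1-3*v)^11) + (47166863029035514591208091394086991/81266540544000000) * (v^30 * (1-3*v)^12) + (47847814092067245324165050658263/135444234240000) * (v^29 * (1-3*v)^13) + (180735372583905270386823420716183/948109639680000) * (v^28 * (1-3*v)^14) + (1548908213982543980929667989957/16930529280000) * (v^27 * (1-3*v)^15) + (14136504719065420282020943418509/361184624640000) * (v^26 * (1-3*v)^16) + (77134145426058866836127051699/5159780352000) * (v^25 * (1-3*v)^17) + (1842609870658542167344726991359/361184624640000) * (v^24 * (1-3*v)^18) + (2341169768102154971970084611/1504935936000) * (v^23 * (1-3*v)^19) + (127505062924216223975845679/300987187200) * (v^22 * (1-3*v)^20) + (1083752675621407160777598451/10534551552000) * (v^21 * (1-3*v)^21) + (11153044413114757938167629/501645312000) * (v^20 * (1-3*v)^22) + (4773602819563817356559/1119744000) * (v^19 * (1-3*v)^23) + (90596054764575944710181/125411328000) * (v^18 * (1-3*v)^24) + (249932239909408191337/2322432000) * (v^17 * (1-3*v)^25) + (19509720472623369841/1393459200)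 * (v^16 * (1-3*v)^26) + (137364190414343369/87091200) * (v^15 * (1-3*v)^27) + (15270330818313/100352) * (v^14 * (1-3*v)^28) + (19986417691279/1612800) * (v^13 * (1-3*v)^29) + (6064044181631/7257600) * (v^12 * (1-3*v)^30) + (6101346841/134400) * (v^11 * (1-3*v)^31) + (462094687/241920) * (v^10 * (1-3*v)^32) + (7065031/120960) * (v^9 * (1-3*v)^33) + (15521/13440) * (v^8 * (1-3*v)^34) + (391/35280) * (v^7 * (1-3*v)^35) := by
      ring
    rw [hid]
    have q0 : (0:ℝ) < v^42 * (1-3*v)^0 := by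
      rw [pow_zero, mul_one]
      positivity
    have q1 : (0:ℝ) ≤ v^41 * (1-3*v)^1 := mul_nonneg (pow_nonneg hv0.le _) (pow_nonneg hnn _)
    have q2 : (0:ℝ) ≤ v^40 * (1-3*v)^2 := mul_nonneg (pow_nonneg hv0.le _) (pow_nonneg hnn _)
    have q3 : (0:ℝ) ≤ v^39 * (1-3*v)^3 := mul_nonneg (pow_nonneg hv0.le _) (pow_nonneg hnn _)
    have q4 : (0:ℝ) ≤ v^38 * (1-3*v)^4 := mul_nonneg (pow_nonneg hv0.le _) (pow_nonneg hnn _)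
    have q5 : (0:ℝ) ≤ v^37 * (1-3*v)^5 := mul_nonneg (pow_nonneg hv0.le _) (pow_nonneg hnn _)
    have q6 : (0:ℝ) ≤ v^36 * (1-3*v)^6 := mul_nonneg (pow_nonneg hv0.le _) (pow_nonneg hnn _)
    have q7 : (0:ℝ) ≤ v^35 * (1-3*v)^7 := mul_nonneg (pow_nonneg hv0.le _) (pow_nonneg hnn _)
    have q8 : (0:ℝ) ≤ v^34 * (1-3*v)^8 := mul_nonneg (pow_nonneg hv0.le _) (pow_nonneg hnn _)
    have q9 : (0:ℝ) ≤ v^33 * (1-3*v)^9 := mul_nonneg (pow_nonneg hv0.le _) (pow_nonneg hnn _)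
    have q10 : (0:ℝ) ≤ v^32 * (1-3*v)^10 := mul_nonneg (pow_nonneg hv0.le _) (pow_nonneg hnn _)
    have q11 : (0:ℝ) ≤ v^31 * (1-3*v)^11 := mul_nonneg (pow_nonneg hv0.le _) (pow_nonneg hnn _)
    have q12 : (0:ℝ) ≤ v^30 * (1-3*v)^12 := mul_nonneg (pow_nonneg hv0.le _) (pow_nonneg hnn _)
    have q13 : (0:ℝ) ≤ v^29 * (1-3*v)^13 := mul_nonneg (pow_nonneg hv0.le _) (pow_nonneg hnn _)
    have q14 : (0:ℝ) ≤ v^28 * (1-3*v)^14 := mul_nonneg (pow_nonneg hv0.le _) (pow_nonneg hnn _)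
    have q15 : (0:ℝ) ≤ v^27 * (1-3*v)^15 := mul_nonneg (pow_nonneg hv0.le _) (pow_nonneg hnn _)
    have q16 : (0:ℝ) ≤ v^26 * (1-3*v)^16 := mul_nonneg (pow_nonneg hv0.le _) (pow_nonneg hnn _)
    have q17 : (0:ℝ) ≤ v^25 * (1-3*v)^17 := mul_nonneg (pow_nonneg hv0.le _) (pow_nonneg hnn _)
    have q18 : (0:ℝ) ≤ v^24 * (1-3*v)^18 := mul_nonneg (pow_nonneg hv0.le _) (pow_nonneg hnn _)
    have q19 : (0:ℝ) ≤ v^23 * (1-3*v)^19 := mul_nonneg (pow_nonneg hv0.le _) (pow_nonneg hnn _)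
    have q20 : (0:ℝ) ≤ v^22 * (1-3*v)^20 := mul_nonneg (pow_nonneg hv0.le _) (pow_nonneg hnn _)
    have q21 : (0:ℝ) ≤ v^21 * (1-3*v)^21 := mul_nonneg (pow_nonneg hv0.le _) (pow_nonneg hnn _)
    have q22 : (0:ℝ) ≤ v^20 * (1-3*v)^22 := mul_nonneg (pow_nonneg hv0.le _) (pow_nonneg hnn _)
    have q23 : (0:ℝ) ≤ v^19 * (1-3*v)^23 := mul_nonneg (pow_nonneg hv0.le _) (pow_nonneg hnn _)
    have q24 : (0:ℝ) ≤ v^18 * (1-3*v)^24 := mul_nonneg (pow_nonneg hv0.le _) (pow_nonneg hnn _)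
    have q25 : (0:ℝ) ≤ v^17 * (1-3*v)^25 := mul_nonneg (pow_nonneg hv0.le _) (pow_nonneg hnn _)
    have q26 : (0:ℝ) ≤ v^16 * (1-3*v)^26 := mul_nonneg (pow_nonneg hv0.le _) (pow_nonneg hnn _)
    have q27 : (0:ℝ) ≤ v^15 * (1-3*v)^27 := mul_nonneg (pow_nonneg hv0.le _) (pow_nonneg hnn _)
    have q28 : (0:ℝ) ≤ v^14 * (1-3*v)^28 := mul_nonneg (pow_nonneg hv0.le _) (pow_nonneg hnn _)
    have q29 : (0:ℝ) ≤ v^13 * (1-3*v)^29 := mul_nonneg (pow_nonneg hv0.le _) (pow_nonneg hnn _)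
    have q30 : (0:ℝ) ≤ v^12 * (1-3*v)^30 := mul_nonneg (pow_nonneg hv0.le _) (pow_nonneg hnn _)
    have q31 : (0:ℝ) ≤ v^11 * (1-3*v)^31 := mul_nonneg (pow_nonneg hv0.le _) (pow_nonneg hnn _)
    have q32 : (0:ℝ) ≤ v^10 * (1-3*v)^32 := mul_nonneg (pow_nonneg hv0.le _) (pow_nonneg hnn _)
    have q33 : (0:ℝ) ≤ v^9 * (1-3*v)^33 := mul_nonneg (pow_nonneg hv0.le _) (pow_nonneg hnn _)
    have q34 : (0:ℝ) ≤ v^8 * (1-3*v)^34 := mul_nonneg (pow_nonneg hv0.le _) (pow_nonneg hnn _)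
    have q35 : (0:ℝ) ≤ v^7 * (1-3*v)^35 := mul_nonneg (pow_nonneg hv0.le _) (pow_nonneg hnn _)
    have q36 : (0:ℝ) ≤ v^6 * (1-3*v)^36 := mul_nonneg (pow_nonneg hv0.le _) (pow_nonneg hnn _)
    have q37 : (0:ℝ) ≤ v^5 * (1-3*v)^37 := mul_nonneg (pow_nonneg hv0.le _) (pow_nonneg hnn _)
    have q38 : (0:ℝ) ≤ v^4 * (1-3*v)^38 := mul_nonneg (pow_nonneg hv0.le _) (pow_nonneg hnn _)
    have q39 : (0:ℝ) ≤ v^3 * (1-3*v)^39 := mul_nonneg (pow_nonneg hv0.le _) (pow_nonneg hnn _)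
    have q40 : (0:ℝ) ≤ v^2 * (1-3*v)^40 := mul_nonneg (pow_nonneg hv0.le _) (pow_nonneg hnn _)
    have q41 : (0:ℝ) ≤ v^1 * (1-3*v)^41 := mul_nonneg (pow_nonneg hv0.le _) (pow_nonneg hnn _)
    have q42 : (0:ℝ) ≤ v^0 * (1-3*v)^42 := mul_nonneg (pow_nonneg hv0.le _) (pow_nonneg hnn _)
    linarith
  have hA : Faux x < trigamma x := Faux_lt_trigamma x hx
  linarith [hexp, hkey, hA]
end

section
/- For all real x ≥ 3, one has ψ'(x) < exp(1/x − 1/(24x⁴) + 7/(360x⁶) + 1/(90x⁷)) − 1, where ψ' is the trigamma function. -/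
/-!
Let `U x = 1/x + 1/(2x²) + 1/(6x³) - 1/(30x⁵) + 1/(42x⁷)`, the asymptotic expansion
`ψ' x ~ 1/x + 1/(2x²) + ∑ B₂ₖ / x^(2k+1)` cut after `B₆ = 1/42`. Its differences satisfy
`U y - U (y + 1) > 1 / y²` for `y > 0` and `U y → 0`, so telescoping gives
`ψ' x = ∑ 1 / (x + n)² < ∑ (U (x + n) - U (x + n + 1)) = U x`.
It remains to see `1 + U x ≤ exp E` for the exponent `E`: writing `u = 1 / x` and
`E = u + r`, one has `exp E ≥ (∑_{i < 8} uⁱ / i!) (1 + r)`, and this product minus `1 + U x`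
is `u⁸` times a polynomial in `u` with positive coefficients.
-/

open Real Filter Topology

lemma hasSum_sub_succ_of_antitone {f : ℕ → ℝ} {l : ℝ} (hf : Antitone f)
    (hl : Tendsto f atTop (𝓝 l)) : HasSum (fun n => f n - f (n + 1)) (f 0 - l) := by
  rw [hasSum_iff_tendsto_nat_of_nonneg fun n => sub_nonneg.2 (hf n.le_succ)]
  simp_rw [Finset.sum_range_sub']
  exact tendsto_const_nhds.sub hl

lemma trigamma_lt_of_tendsto_of_sub_succ {g : ℝ → ℝ} (hg : Tendsto g atTop (𝓝 0))
    (hstep : ∀ y, 0 < y → 1 / y ^ 2 < g y - g (y + 1)) {x : ℝ} (hx : 0 < x) :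
    trigamma x < g x := by
  have hstep' (n : ℕ) : 1 / (x + n) ^ 2 < g (x + n) - g (x + (n + 1 : ℕ)) := by
    rw [Nat.cast_succ, ← add_assoc]
    exact hstep _ (by positivity)
  have hanti : Antitone fun n : ℕ => g (x + n) :=
    antitone_nat_of_succ_le fun n => by
      linarith [hstep' n, (by positivity : 0 < 1 / (x + n) ^ 2)]
  have hlim : Tendsto (fun n : ℕ => g (x + n)) atTop (𝓝 0) :=
    hg.comp (tendsto_atTop_add_const_left _ _ tendsto_natCast_atTop_atTop)
  have htele := hasSum_sub_succ_of_antitone hanti hlim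
  simp only [CharP.cast_eq_zero, add_zero, sub_zero] at htele
  have hsum : Summable fun n : ℕ => 1 / (x + n) ^ 2 :=
    htele.summable.of_nonneg_of_le (fun n => by positivity) fun n => (hstep' n).le
  exact hasSum_lt (fun n => (hstep' n).le) (hstep' 0) hsum.hasSum htele

noncomputable def trigammaUpper (x : ℝ) : ℝ :=
  1 / x + 1 / (2 * x ^ 2) + 1 / (6 * x ^ 3) - 1 / (30 * x ^ 5) + 1 / (42 * x ^ 7)

lemma trigammaUpper_eq (x : ℝ) :
    trigammaUpper x = x⁻¹ + (x⁻¹) ^ 2 / 2 + (x⁻¹) ^ 3 / 6 - (x⁻¹) ^ 5 / 30 + (x⁻¹) ^ 7 / 42 := by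
  simp only [trigammaUpper, one_div, mul_inv, inv_pow]
  ring

lemma tendsto_trigammaUpper_atTop : Tendsto trigammaUpper atTop (𝓝 0) := by
  have hpoly : Tendsto (fun u : ℝ => u + u ^ 2 / 2 + u ^ 3 / 6 - u ^ 5 / 30 + u ^ 7 / 42)
      (𝓝 0) (𝓝 0) := by
    simpa using ((by fun_prop : Continuous fun u : ℝ =>
      u + u ^ 2 / 2 + u ^ 3 / 6 - u ^ 5 / 30 + u ^ 7 / 42).tendsto 0)
  simpa only [Function.comp_def, ← trigammaUpper_eq] using hpoly.comp tendsto_inv_atTop_zero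

lemma inv_sq_lt_trigammaUpper_sub_succ {y : ℝ} (hy : 0 < y) :
    1 / y ^ 2 < trigammaUpper y - trigammaUpper (y + 1) := by
  have h : trigammaUpper y - trigammaUpper (y + 1) - 1 / y ^ 2
      = (63 * y ^ 4 + 126 * y ^ 3 + 98 * y ^ 2 + 35 * y + 5) / (210 * y ^ 7 * (y + 1) ^ 7) := by
    unfold trigammaUpper
    field_simp
    ring
  have hpos : 0 < (63 * y ^ 4 + 126 * y ^ 3 + 98 * y ^ 2 + 35 * y + 5)
      / (210 * y ^ 7 * (y + 1) ^ 7) := by positivity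
  linarith

lemma trigamma_lt_trigammaUpper {x : ℝ} (hx : 0 < x) : trigamma x < trigammaUpper x :=
  trigamma_lt_of_tendsto_of_sub_succ tendsto_trigammaUpper_atTop
    (fun _ => inv_sq_lt_trigammaUpper_sub_succ) hx

lemma trigammaUpper_le_exp_sub_one {x : ℝ} (hx : 0 < x) :
    trigammaUpper x ≤ exp (1 / x - 1 / (24 * x ^ 4) + 7 / (360 * x ^ 6) + 1 / (90 * x ^ 7)) - 1 := by
  set u := x⁻¹
  have hu : 0 ≤ u := by positivity
  set r := -u ^ 4 / 24 + 7 * u ^ 6 / 360 + u ^ 7 / 90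
  have hexp : 1 / x - 1 / (24 * x ^ 4) + 7 / (360 * x ^ 6) + 1 / (90 * x ^ 7) = u + r := by
    simp only [r, u, one_div, mul_inv, inv_pow]
    ring
  have hr : 0 ≤ 1 + r := by
    simp only [r]
    nlinarith [mul_nonneg (sq_nonneg u) (sq_nonneg (u ^ 2 - 2)), sq_nonneg (u ^ 2 - 2),
      pow_nonneg hu 7]
  have hS := sum_le_exp_of_nonneg hu 8
  have hpoly : trigammaUpper x + 1 ≤ (∑ i ∈ Finset.range 8, u ^ i / i.factorial) * (1 + r) := by
    rw [trigammaUpper_eq, ← sub_nonneg]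
    have hdiff : (∑ i ∈ Finset.range 8, u ^ i / i.factorial) * (1 + r)
        - (u + u ^ 2 / 2 + u ^ 3 / 6 - u ^ 5 / 30 + u ^ 7 / 42 + 1)
        = u ^ 8 * (11 / 576 + 73 / 8640 * u + 1 / 384 * u ^ 2 + 373 / 604800 * u ^ 3
            + 31 / 259200 * u ^ 4 + 1 / 51840 * u ^ 5 + 1 / 453600 * u ^ 6) := by
      simp only [Finset.sum_range_succ, Finset.sum_range_zero, Nat.factorial, r]
      push_cast
      ring
    rw [hdiff]
    positivity
  rw [hexp, le_sub_iff_add_le]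
  calc trigammaUpper x + 1
      ≤ (∑ i ∈ Finset.range 8, u ^ i / i.factorial) * (1 + r) := hpoly
    _ ≤ exp u * exp r := mul_le_mul hS (by linarith [add_one_le_exp r]) hr (exp_pos u).le
    _ = exp (u + r) := (exp_add u r).symm

theorem stmt_3 (x : ℝ) (hx : 3 ≤ x) :
    trigamma x < Real.exp (1/x - 1/(24*x^4) + 7/(360*x^6) + 1/(90*x^7)) - 1 :=
  (trigamma_lt_trigammaUpper (by linarith)).trans_le
    (trigammaUpper_le_exp_sub_one (by linarith))
end

section
/- For all real x ≥ 1, ψ'(x+1) > (e^{1/(x+1)} − e^{−1/x})/2 + 1/(24x⁵) − 5/(48x⁶), where ψ' is the trigamma function. -/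
open Real

section Aux
open Filter

noncomputable def gaux (t : ℝ) : ℝ := 1/t + 1/(2*t^2) + 1/(6*t^3) - 1/(30*t^5)

lemma gaux_step_nonneg {t : ℝ} (ht : 2 ≤ t) : 0 ≤ gaux t - gaux (t + 1) := by
  have h0 : (0:ℝ) < t := by linarith
  have h1 : (0:ℝ) < t + 1 := by linarith
  have hid : gaux t - gaux (t + 1)
      = (30*t^8 + 150*t^7 + 300*t^6 + 300*t^5 + 150*t^4 + 30*t^3 - 5*t^2 - 5*t - 1)
        / (30 * t^5 * (t+1)^5) := by
    unfold gaux
    field_simp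
    ring
  rw [hid]
  apply div_nonneg _ (by positivity)
  nlinarith [sq_nonneg t, pow_pos h0 3, pow_pos h0 4, pow_pos h0 5]

lemma gaux_step_le {t : ℝ} (ht : 0 < t) : gaux t - gaux (t + 1) ≤ 1 / t^2 := by
  have h1 : (0:ℝ) < t + 1 := by linarith
  have hid : 1 / t^2 - (gaux t - gaux (t + 1))
      = (5*t^2 + 5*t + 1) / (30 * t^5 * (t+1)^5) := by
    unfold gaux
    field_simp
    ring
  nlinarith [div_nonneg (by nlinarith : (0:ℝ) ≤ 5*t^2+5*t+1)
    (le_of_lt (by positivity : (0:ℝ) < 30 * t^5 * (t+1)^5)), hid]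

open Filter in
lemma gaux_tendsto_zero : Filter.Tendsto gaux atTop (nhds 0) := by
  have hA : ∀ (c : ℝ) (k : ℕ), 0 < c → k ≠ 0 →
      Tendsto (fun t : ℝ => 1/(c*t^k)) atTop (nhds 0) := by
    intro c k hc hk
    have h1 : Tendsto (fun t : ℝ => c * t^k) atTop atTop :=
      (tendsto_pow_atTop hk).const_mul_atTop hc
    have h2 := h1.inv_tendsto_atTop
    have he : (fun t : ℝ => 1/(c*t^k)) = (fun t : ℝ => c * t^k)⁻¹ := by
      funext t; simp [one_div]
    rw [he]; exact h2
  have h1 := hA 1 1 one_pos one_ne_zero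
  have h2 := hA 2 2 two_pos (by norm_num)
  have h3 := hA 6 3 (by norm_num) (by norm_num)
  have h5 := hA 30 5 (by norm_num) (by norm_num)
  have he : gaux = fun t : ℝ => 1/(1*t^1) + 1/(2*t^2) + (1/(6*t^3) - 1/(30*t^5)) := by
    funext t; unfold gaux; ring
  rw [he]
  have := (h1.add h2).add (h3.sub h5)
  simpa using this

open Filter in
lemma telescope_hasSum (x : ℝ) (hx : 1 ≤ x) :
    HasSum (fun n : ℕ => gaux (x + 1 + n) - gaux (x + 1 + n + 1)) (gaux (x + 1)) := by
  have hterm : ∀ n : ℕ, 0 ≤ gaux (x + 1 + n) - gaux (x + 1 + n + 1) := by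
    intro n
    have : (2:ℝ) ≤ x + 1 + n := by
      have : (0:ℝ) ≤ n := Nat.cast_nonneg n
      linarith
    simpa using gaux_step_nonneg this
  rw [hasSum_iff_tendsto_nat_of_nonneg hterm]
  have hps : ∀ N : ℕ, ∑ n ∈ Finset.range N, (gaux (x + 1 + n) - gaux (x + 1 + n + 1))
      = gaux (x + 1) - gaux (x + 1 + N) := by
    intro N
    have := Finset.sum_range_sub' (fun n : ℕ => gaux (x + 1 + n)) N
    simp only [Nat.cast_add, Nat.cast_one, Nat.cast_zero, add_zero] at this
    rw [← this]
    apply Finset.sum_congr rfl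
    intro i _
    ring_nf
  simp only [hps]
  have hcomp : Tendsto (fun N : ℕ => gaux (x + 1 + N)) atTop (nhds 0) := by
    have h0 : Tendsto (fun N : ℕ => x + 1 + (N:ℝ)) atTop atTop :=
      tendsto_atTop_add_const_left _ _ tendsto_natCast_atTop_atTop
    exact gaux_tendsto_zero.comp h0
  simpa using (tendsto_const_nhds (x := gaux (x+1))).sub hcomp

lemma summable_aux (x : ℝ) (hx : 1 ≤ x) :
    Summable (fun n : ℕ => 1 / (x + 1 + n)^2) := by
  have hbase : Summable (fun n : ℕ => 1 / ((n:ℝ) + 1)^2) := by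
    have h := Real.summable_one_div_nat_pow.mpr (le_refl 2)
    have := (summable_nat_add_iff 1).mpr h
    simpa [add_comm] using this
  apply Summable.of_nonneg_of_le (fun n => by positivity) _ hbase
  intro n
  have h1 : (0:ℝ) < (n:ℝ) + 1 := by positivity
  have h2 : (n:ℝ) + 1 ≤ x + 1 + n := by linarith
  gcongr

lemma exp_upper (x : ℝ) (hx : 1 ≤ x) :
    Real.exp (1/(x+1)) ≤ 1 + 1/(x+1) + (1/(x+1))^2/2 + (1/(x+1))^3/6 + (1/(x+1))^4/24
      + (1/(x+1))^5/120 + (1/(x+1))^6/720 + (1/(x+1))^7/4410 := by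
  have h0 : (0:ℝ) < x + 1 := by linarith
  have ha0 : (0:ℝ) ≤ 1/(x+1) := by positivity
  have ha1 : 1/(x+1) ≤ 1 := by
    rw [div_le_one h0]; linarith
  have h := Real.exp_bound' ha0 ha1 (n := 7) (by norm_num)
  calc Real.exp (1/(x+1)) ≤ _ := h
    _ = _ := by
      norm_num [Finset.sum_range_succ, Nat.factorial]
      ring

lemma exp_lower (x : ℝ) (hx : 1 ≤ x) :
    1 - 1/x + (1/x)^2/2 - (1/x)^3/6 + (1/x)^4/24 - (1/x)^5/120 + (1/x)^6/720 - (1/x)^7/4410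
      ≤ Real.exp (-1/x) := by
  have h0 : (0:ℝ) < x := by linarith
  have hb1 : 1/x ≤ 1 := by rw [div_le_one h0]; linarith
  have hxb : (0:ℝ) ≤ 1/x := by positivity
  have hneg : (-1/x : ℝ) = -(1/x) := by ring
  have habs2 : |(-1/x : ℝ)| = 1/x := by
    rw [hneg, abs_neg, abs_of_nonneg hxb]
  have habs : |(-1/x : ℝ)| ≤ 1 := by rw [habs2]; exact hb1
  have h := Real.exp_bound habs (n := 7) (by norm_num)
  have h2 := (abs_sub_le_iff.mp h).2
  rw [habs2] at h2
  have hsum : ∑ m ∈ Finset.range 7, (-1/x) ^ m / m.factorial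
      = 1 - 1/x + (1/x)^2/2 - (1/x)^3/6 + (1/x)^4/24 - (1/x)^5/120 + (1/x)^6/720 := by
    norm_num [Finset.sum_range_succ, Nat.factorial]
    ring
  rw [hsum] at h2
  have hc : ((Nat.succ 7 : ℕ):ℝ) / ((Nat.factorial 7 : ℕ) * ((7:ℕ):ℝ)) = 1/4410 := by
    norm_num [Nat.factorial]
  rw [hc] at h2
  linarith

end Aux

set_option maxHeartbeats 1000000 in
theorem stmt_4 (x : ℝ) (hx : 1 ≤ x) :
    trigamma (x + 1) >
      (Real.exp (1/(x+1)) - Real.exp (-1/x)) / 2 + 1/(24*x^5) - 5/(48*x^6) := by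
  have hx0 : (0:ℝ) < x := by linarith
  have hx1 : (0:ℝ) < x + 1 := by linarith
  -- lower bound on trigamma
  have hlow : gaux (x + 1) ≤ trigamma (x + 1) := by
    unfold trigamma
    rw [← (telescope_hasSum x hx).tsum_eq]
    refine Summable.tsum_le_tsum (fun n => ?_) (telescope_hasSum x hx).summable (summable_aux x hx)
    have ht : (0:ℝ) < x + 1 + n := by positivity
    exact gaux_step_le ht
  -- the key rational inequality
  set EA : ℝ := 1 + 1/(x+1) + (1/(x+1))^2/2 + (1/(x+1))^3/6 + (1/(x+1))^4/24
      + (1/(x+1))^5/120 + (1/(x+1))^6/720 + (1/(x+1))^7/4410 with hEA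
  set EB : ℝ := 1 - 1/x + (1/x)^2/2 - (1/x)^3/6 + (1/x)^4/24 - (1/x)^5/120 + (1/x)^6/720
      - (1/x)^7/4410 with hEB
  have hkey : gaux (x + 1) - ((EA - EB)/2 + 1/(24*x^5) - 5/(48*x^6))
      = (7628*x^7 + 58303*x^6 + 152957*x^5 + 195181*x^4 + 133931*x^3 + 48391*x^2
          + 7343*x - 8) / (70560 * x^7 * (x+1)^7) := by
    rw [hEA, hEB]
    unfold gaux
    field_simp
    ring
  have hy : (0:ℝ) ≤ x - 1 := by linarith
  have hp : (0:ℝ) < 7628*x^7 + 58303*x^6 + 152957*x^5 + 195181*x^4 + 133931*x^3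
      + 48391*x^2 + 7343*x - 8 := by
    nlinarith [pow_nonneg hy 7, pow_nonneg hy 6, pow_nonneg hy 5, pow_nonneg hy 4,
      pow_nonneg hy 3, pow_nonneg hy 2, hy]
  have hd : (0:ℝ) < (7628*x^7 + 58303*x^6 + 152957*x^5 + 195181*x^4 + 133931*x^3
      + 48391*x^2 + 7343*x - 8) / (70560 * x^7 * (x+1)^7) :=
    div_pos hp (by positivity)
  have hgt : (EA - EB)/2 + 1/(24*x^5) - 5/(48*x^6) < gaux (x + 1) := by linarith [hkey ▸ hd]
  have h1 := exp_upper x hx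
  have h2 := exp_lower x hx
  rw [← hEA] at h1
  rw [← hEB] at h2
  have : (Real.exp (1/(x+1)) - Real.exp (-1/x)) / 2 ≤ (EA - EB) / 2 := by linarith
  linarith
end

section
/- For all real x ≥ 1, ψ'(x+1) < (e^{1/(x+1)} − e^{−1/x})/2 + 1/(24x⁵), where ψ' is the trigamma function. -/
open Real

/-- Auxiliary upper bound function for the trigamma function. -/
noncomputable def gg (y : ℝ) : ℝ := 1/y + 1/(2*y^2) + 1/(6*y^3) - 1/(30*y^5) + 1/(42*y^7)

lemma gg_nonneg {y : ℝ} (hy : 1 ≤ y) : 0 ≤ gg y := by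
  have h0 : 0 < y := by linarith
  have key : gg y = (210*y^6 + 105*y^5 + 35*y^4 - 7*y^2 + 5) / (210*y^7) := by
    unfold gg; field_simp; ring
  rw [key]
  apply div_nonneg _ (by positivity)
  nlinarith [sq_nonneg y, sq_nonneg (y^2 - 1), pow_nonneg h0.le 4, pow_nonneg h0.le 5,
    pow_nonneg h0.le 6]

lemma gg_step {y : ℝ} (hy : 0 < y) : 1/y^2 + gg (y+1) ≤ gg y := by
  have h1 : (0:ℝ) < y + 1 := by linarith
  have key : gg y - (1/y^2 + gg (y+1)) =
      (63*y^4 + 126*y^3 + 98*y^2 + 35*y + 5) / (210*y^7*(y+1)^7) := by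
    unfold gg; field_simp; ring
  have hpos : (0:ℝ) ≤ (63*y^4 + 126*y^3 + 98*y^2 + 35*y + 5) / (210*y^7*(y+1)^7) := by
    positivity
  linarith [key ▸ hpos]

lemma gg_sum_le {y : ℝ} (hy : 1 ≤ y) (n : ℕ) :
    ∑ i ∈ Finset.range n, 1/(y+i)^2 ≤ gg y - gg (y + n) := by
  induction n with
  | zero => simp
  | succ n ih =>
      rw [Finset.sum_range_succ]
      have hyn : (0:ℝ) < y + n := by positivity
      have hstep := gg_step hyn
      have : (y + n) + 1 = y + (n+1 : ℕ) := by push_cast; ring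
      rw [this] at hstep
      linarith

lemma trigamma_le_gg {y : ℝ} (hy : 1 ≤ y) : trigamma y ≤ gg y := by
  apply Real.tsum_le_of_sum_range_le
  · intro n
    have : (0:ℝ) < y + n := by positivity
    positivity
  · intro n
    have h1 := gg_sum_le hy n
    have h2 : 0 ≤ gg (y + n) := gg_nonneg (by linarith [Nat.cast_nonneg (α := ℝ) n])
    linarith

theorem stmt_5 (x : ℝ) (hx : 1 ≤ x) :
    trigamma (x + 1) <
      (Real.exp (1/(x+1)) - Real.exp (-1/x)) / 2 + 1/(24*x^5) := by
  have hx0 : (0:ℝ) < x := by linarith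
  have hx1 : (0:ℝ) < x + 1 := by linarith
  -- lower bound for exp (1/(x+1))
  have hA : 1 + 1/(x+1) + (1/(x+1))^2/2 + (1/(x+1))^3/6 + (1/(x+1))^4/24 + (1/(x+1))^5/120
      ≤ Real.exp (1/(x+1)) := by
    have hsumA : ∑ i ∈ Finset.range 6, (1/(x+1))^i / i.factorial =
        1 + 1/(x+1) + (1/(x+1))^2/2 + (1/(x+1))^3/6 + (1/(x+1))^4/24 + (1/(x+1))^5/120 := by
      simp only [Finset.sum_range_succ, Finset.sum_range_zero, Nat.factorial]
      push_cast
      ring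
    have h := Real.sum_le_exp_of_nonneg (x := 1/(x+1)) (by positivity) 6
    rw [hsumA] at h
    exact h
  -- upper bound for exp (-1/x)
  have hB : Real.exp (-1/x) ≤
      1 - 1/x + (1/x)^2/2 - (1/x)^3/6 + (1/x)^4/24 - (1/x)^5/120 + (1/x)^6*(7/4320) := by
    have habs : |(-1/x : ℝ)| ≤ 1 := by
      rw [abs_le]
      constructor
      · have : 1/x ≤ 1 := by
          rw [div_le_one hx0]; linarith
        simp only [neg_div]; linarith
      · have : (0:ℝ) < 1/x := by positivity
        simp only [neg_div]; linarith
    have h := Real.exp_bound habs (n := 6) (by norm_num)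
    rw [abs_le] at h
    have h2 := h.2
    have hsum : ∑ m ∈ Finset.range 6, (-1/x)^m / m.factorial =
        1 - 1/x + (1/x)^2/2 - (1/x)^3/6 + (1/x)^4/24 - (1/x)^5/120 := by
      simp only [Finset.sum_range_succ, Finset.sum_range_zero, Nat.factorial]
      push_cast
      ring
    have habs2 : |(-1/x : ℝ)| = 1/x := by
      rw [neg_div, abs_neg, abs_of_pos (by positivity)]
    rw [hsum, habs2] at h2
    norm_num [Nat.factorial] at h2
    simp only [one_div, inv_pow]
    linarith
  -- the key polynomial inequality
  have hQ : (0:ℝ) < 6251*x^7 + 36017*x^6 + 82131*x^5 + 89005*x^4 + 52717*x^3 + 17115*x^2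
      + 2429*x - 49 := by
    nlinarith [pow_nonneg (by linarith : (0:ℝ) ≤ x - 1) 2,
      pow_nonneg (by linarith : (0:ℝ) ≤ x - 1) 3,
      pow_nonneg (by linarith : (0:ℝ) ≤ x - 1) 4,
      pow_nonneg (by linarith : (0:ℝ) ≤ x - 1) 5,
      pow_nonneg (by linarith : (0:ℝ) ≤ x - 1) 6,
      pow_nonneg (by linarith : (0:ℝ) ≤ x - 1) 7]
  have hkey : ((1 + 1/(x+1) + (1/(x+1))^2/2 + (1/(x+1))^3/6 + (1/(x+1))^4/24 + (1/(x+1))^5/120)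
        - (1 - 1/x + (1/x)^2/2 - (1/x)^3/6 + (1/x)^4/24 - (1/x)^5/120 + (1/x)^6*(7/4320)))/2
        + 1/(24*x^5) - gg (x+1)
      = (6251*x^7 + 36017*x^6 + 82131*x^5 + 89005*x^4 + 52717*x^3 + 17115*x^2 + 2429*x - 49)
        / (60480 * x^6 * (x+1)^7) := by
    unfold gg
    field_simp
    ring
  have hpos : (0:ℝ) < (6251*x^7 + 36017*x^6 + 82131*x^5 + 89005*x^4 + 52717*x^3 + 17115*x^2
      + 2429*x - 49) / (60480 * x^6 * (x+1)^7) := by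
    apply div_pos hQ
    positivity
  have h1 : trigamma (x+1) ≤ gg (x+1) := trigamma_le_gg (by linarith)
  linarith [hkey ▸ hpos]
end

section
/- For all real x ≥ 1, ψ'(x+1) > (e^{2/(x+1)} − e^{−2/x})/4 − 1/(45x⁷), where ψ' is the trigamma function. -/
open Real Filter

noncomputable def tg (u : ℝ) : ℝ :=
  1/u + 1/(2*u^2) + 1/(6*u^3) - 1/(30*u^5) + 1/(42*u^7) - 1/(30*u^9)

lemma tg_step (u : ℝ) (hu : 2 ≤ u) : tg u - tg (u+1) < 1/u^2 := by
  have h0 : (0:ℝ) < u := by linarith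
  have h1 : (0:ℝ) < u + 1 := by linarith
  have hs : (0:ℝ) ≤ u - 2 := by linarith
  have key : tg u - tg (u+1) - 1/u^2
      = -(44809 + 105855*(u-2) + 104521*(u-2)^2 + 55215*(u-2)^3 + 16459*(u-2)^4
        + 2625*(u-2)^5 + 175*(u-2)^6) / (210 * u^9 * (u+1)^9) := by
    rw [tg, tg]
    field_simp
    ring
  have h2 : tg u - tg (u+1) - 1/u^2 < 0 := by
    rw [key]
    apply div_neg_of_neg_of_pos
    · nlinarith [pow_nonneg hs 2, pow_nonneg hs 3, pow_nonneg hs 4, pow_nonneg hs 5,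
        pow_nonneg hs 6]
    · positivity
  linarith

lemma tg_antitone (u : ℝ) (hu : 2 ≤ u) : 0 ≤ tg u - tg (u+1) := by
  have h0 : (0:ℝ) < u := by linarith
  have h1 : (0:ℝ) < u + 1 := by linarith
  have hs : (0:ℝ) ≤ u - 2 := by linarith
  have key : tg u - tg (u+1)
      = (529034231 + 3438907905*(u-2) + 10449206519*(u-2)^2 + 19700790705*(u-2)^3
        + 25796260901*(u-2)^4 + 24874672935*(u-2)^5 + 18272243885*(u-2)^6
        + 10430276850*(u-2)^7 + 4675907250*(u-2)^8 + 1651788600*(u-2)^9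
        + 458275440*(u-2)^10 + 98810460*(u-2)^11 + 16231740*(u-2)^12
        + 1963920*(u-2)^13 + 165060*(u-2)^14 + 8610*(u-2)^15 + 210*(u-2)^16)
        / (210 * u^9 * (u+1)^9) := by
    rw [tg, tg]
    field_simp
    ring
  rw [key]
  apply div_nonneg _ (by positivity)
  have := pow_nonneg hs
  positivity

lemma tg_nonneg (u : ℝ) (hu : 2 ≤ u) : 0 ≤ tg u := by
  have h0 : (0:ℝ) < u := by linarith
  have hs : (0:ℝ) ≤ u - 2 := by linarith
  have key : tg u = (69341 + 268596*(u-2) + 455117*(u-2)^2 + 440664*(u-2)^3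
      + 266693*(u-2)^4 + 103320*(u-2)^5 + 25025*(u-2)^6 + 3465*(u-2)^7 + 210*(u-2)^8)
      / (210 * u^9) := by
    rw [tg]; field_simp; ring
  rw [key]
  apply div_nonneg _ (by positivity)
  positivity

lemma tg_le (u : ℝ) (hu : 2 ≤ u) : tg u ≤ 3/u := by
  have h0 : (0:ℝ) < u := by linarith
  have hs : (0:ℝ) ≤ u - 2 := by linarith
  have key : 3/u - tg u = (91939 + 376524*(u-2) + 673843*(u-2)^2 + 688296*(u-2)^3
      + 438907*(u-2)^4 + 178920*(u-2)^5 + 45535*(u-2)^6 + 6615*(u-2)^7 + 420*(u-2)^8)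
      / (210 * u^9) := by
    rw [tg]; field_simp; ring
  nlinarith [div_nonneg (by positivity : (0:ℝ) ≤ 91939 + 376524*(u-2) + 673843*(u-2)^2
    + 688296*(u-2)^3 + 438907*(u-2)^4 + 178920*(u-2)^5 + 45535*(u-2)^6 + 6615*(u-2)^7
    + 420*(u-2)^8) (by positivity : (0:ℝ) ≤ 210*u^9)]

lemma tg_tendsto (y : ℝ) (hy : 2 ≤ y) :
    Tendsto (fun n : ℕ => tg (y + n)) atTop (nhds 0) := by
  have hyn : Tendsto (fun n : ℕ => y + (n:ℝ)) atTop atTop :=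
    tendsto_atTop_add_const_left _ y tendsto_natCast_atTop_atTop
  have hinv : Tendsto (fun n : ℕ => (y + (n:ℝ))⁻¹) atTop (nhds 0) :=
    hyn.inv_tendsto_atTop
  have h3 : Tendsto (fun n : ℕ => 3 / (y + (n:ℝ))) atTop (nhds 0) := by
    have := hinv.const_mul (3:ℝ)
    simpa [div_eq_mul_inv] using this
  have hyn : ∀ n : ℕ, 2 ≤ y + (n:ℝ) := fun n => by
    have := Nat.cast_nonneg (α := ℝ) n
    linarith
  apply squeeze_zero (fun n => tg_nonneg _ (hyn n)) (fun n => tg_le _ (hyn n)) h3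

lemma trigamma_gt_tg (y : ℝ) (hy : 2 ≤ y) : tg y < ∑' n : ℕ, 1 / (y + n) ^ 2 := by
  set f : ℕ → ℝ := fun n => tg (y + n) - tg (y + n + 1) with hf
  have hyn : ∀ n : ℕ, 2 ≤ y + (n:ℝ) := fun n => by
    have := Nat.cast_nonneg (α := ℝ) n
    linarith
  have hf0 : ∀ n : ℕ, 0 ≤ f n := fun n => tg_antitone _ (hyn n)
  have hfle : ∀ n : ℕ, f n ≤ 1 / (y + n) ^ 2 := fun n => (tg_step _ (hyn n)).le
  have hsum : Summable (fun n : ℕ => 1 / (y + (n:ℝ)) ^ 2) := by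
    have hbase : Summable (fun n : ℕ => 1 / ((n:ℝ) + 1) ^ 2) := by
      have h := (summable_nat_add_iff 1).2 (Real.summable_one_div_nat_pow.2 one_lt_two)
      simpa using h
    apply Summable.of_nonneg_of_le (fun n => by positivity) _ hbase
    intro n
    apply one_div_le_one_div_of_le (by positivity)
    have : (n:ℝ) + 1 ≤ y + n := by linarith [hyn n]
    nlinarith [this, (by positivity : (0:ℝ) < (n:ℝ)+1)]
  have hHasSum : HasSum f (tg y) := by
    rw [hasSum_iff_tendsto_nat_of_nonneg hf0]
    have hps : ∀ n : ℕ, ∑ i ∈ Finset.range n, f i = tg y - tg (y + n) := by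
      intro n
      have h1 : ∑ i ∈ Finset.range n, f i
          = ∑ i ∈ Finset.range n, (tg (y + i) - tg (y + ((i+1 : ℕ) : ℝ))) := by
        apply Finset.sum_congr rfl
        intro i _
        simp only [hf]
        push_cast
        ring_nf
      rw [h1, Finset.sum_range_sub' (fun i : ℕ => tg (y + i)) n]
      norm_num
    simp only [hps]
    have := (tg_tendsto y hy).const_sub (tg y)
    simpa using this
  calc tg y = ∑' n, f n := hHasSum.tsum_eq.symm
    _ < ∑' n : ℕ, 1 / (y + n) ^ 2 := by
        have h0 : f 0 < 1 / (y + ((0:ℕ):ℝ)) ^ 2 := by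
          simp only [hf, Nat.cast_zero, add_zero]
          exact tg_step y hy
        exact Summable.tsum_lt_tsum_of_nonneg hf0 hfle h0 hsum

lemma Q_nonneg (t : ℝ) (h0 : 0 ≤ t) (h1 : t ≤ 1) :
    0 ≤ 1 - t + t^2/2 - t^3/6 + t^4/24 - t^5/120 + t^6/720 - t^7/5040 + t^8/40320
      - t^9/326592 := by
  have hs : (0:ℝ) ≤ 1 - t := by linarith
  nlinarith [pow_nonneg hs 2, pow_nonneg hs 3, pow_nonneg hs 4, pow_nonneg hs 5,
    pow_nonneg hs 6, pow_nonneg hs 7, pow_nonneg hs 8, pow_nonneg hs 9,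
    mul_nonneg (pow_nonneg h0 7) hs, mul_nonneg (pow_nonneg h0 8) hs, pow_nonneg h0 9]

set_option maxHeartbeats 2000000 in
lemma main_poly (x : ℝ) (hx : 1 ≤ x) :
    ((1 + (2/(x+1)) + (2/(x+1))^2/2 + (2/(x+1))^3/6 + (2/(x+1))^4/24 + (2/(x+1))^5/120
      + (2/(x+1))^6/720 + (2/(x+1))^7/5040 + (2/(x+1))^8/40320 + (2/(x+1))^9/326592)
     - (1 - (1/x) + (1/x)^2/2 - (1/x)^3/6 + (1/x)^4/24 - (1/x)^5/120 + (1/x)^6/720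
      - (1/x)^7/5040 + (1/x)^8/40320 - (1/x)^9/326592)^2) / 4 - 1/(45*x^7)
    ≤ tg (x+1) := by
  have hx0 : (0:ℝ) < x := by linarith
  have hx1 : (0:ℝ) < x + 1 := by linarith
  have hs : (0:ℝ) ≤ x - 1 := by linarith
  have key : tg (x+1) - (((1 + (2/(x+1)) + (2/(x+1))^2/2 + (2/(x+1))^3/6 + (2/(x+1))^4/24
      + (2/(x+1))^5/120 + (2/(x+1))^6/720 + (2/(x+1))^7/5040 + (2/(x+1))^8/40320
      + (2/(x+1))^9/326592)
     - (1 - (1/x) + (1/x)^2/2 - (1/x)^3/6 + (1/x)^4/24 - (1/x)^5/120 + (1/x)^6/720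
      - (1/x)^7/5040 + (1/x)^8/40320 - (1/x)^9/326592)^2) / 4 - 1/(45*x^7))
      = (467428696990208 + 7194479499465984*(x-1) + 52238610979619328*(x-1)^2
        + 237810685429553664*(x-1)^3 + 760855987962532800*(x-1)^4
        + 1817449936097403744*(x-1)^5 + 3360655445792934048*(x-1)^6
        + 4921592036524869168*(x-1)^7 + 5791278074032800306*(x-1)^8
        + 5522219363270558269*(x-1)^9 + 4283129661950234736*(x-1)^10
        + 2701076194318438161*(x-1)^11 + 1378600369915471344*(x-1)^12
        + 564168094867760112*(x-1)^13 + 182302703047356192*(x-1)^14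
        + 45423195075484128*(x-1)^15 + 8409348994161024*(x-1)^16
        + 1088063991213696*(x-1)^17 + 87736086385920*(x-1)^18
        + 3318383738880*(x-1)^19) / (42664933785600 * x^18 * (x+1)^9) := by
    rw [tg]
    field_simp
    ring
  have hnum : (0:ℝ) ≤ (467428696990208 + 7194479499465984*(x-1) + 52238610979619328*(x-1)^2
        + 237810685429553664*(x-1)^3 + 760855987962532800*(x-1)^4
        + 1817449936097403744*(x-1)^5 + 3360655445792934048*(x-1)^6
        + 4921592036524869168*(x-1)^7 + 5791278074032800306*(x-1)^8
        + 5522219363270558269*(x-1)^9 + 4283129661950234736*(x-1)^10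
        + 2701076194318438161*(x-1)^11 + 1378600369915471344*(x-1)^12
        + 564168094867760112*(x-1)^13 + 182302703047356192*(x-1)^14
        + 45423195075484128*(x-1)^15 + 8409348994161024*(x-1)^16
        + 1088063991213696*(x-1)^17 + 87736086385920*(x-1)^18
        + 3318383738880*(x-1)^19) := by positivity
  have hden : (0:ℝ) < 42664933785600 * x^18 * (x+1)^9 := by positivity
  nlinarith [div_nonneg hnum hden.le, key]

theorem stmt_6 (x : ℝ) (hx : 1 ≤ x) :
    trigamma (x + 1) >
      (Real.exp (2/(x+1)) - Real.exp (-2/x)) / 4 - 1/(45*x^7) := by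
  have hx0 : (0:ℝ) < x := by linarith
  have hx1 : (0:ℝ) < x + 1 := by linarith
  -- upper bound for exp(2/(x+1))
  have ha0 : 0 ≤ 2/(x+1) := by positivity
  have ha1 : 2/(x+1) ≤ 1 := by rw [div_le_one hx1]; linarith
  have hA := Real.exp_bound' ha0 ha1 (n := 9) (by norm_num)
  have hsum9 : (∑ m ∈ Finset.range 9, (2/(x+1))^m / (m.factorial : ℝ))
      + (2/(x+1))^9 * (9+1) / ((Nat.factorial 9 : ℝ) * 9)
      = 1 + (2/(x+1)) + (2/(x+1))^2/2 + (2/(x+1))^3/6 + (2/(x+1))^4/24 + (2/(x+1))^5/120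
      + (2/(x+1))^6/720 + (2/(x+1))^7/5040 + (2/(x+1))^8/40320 + (2/(x+1))^9/326592 := by
    simp [Finset.sum_range_succ, Nat.factorial]
    norm_num
    ring
  push_cast at hA
  push_cast at hsum9
  rw [hsum9] at hA
  -- lower bound for exp(-(1/x))
  have ht0 : 0 ≤ 1/x := by positivity
  have ht1 : 1/x ≤ 1 := by rw [div_le_one hx0]; linarith
  have habs : |(-(1/x))| ≤ 1 := by rw [abs_neg, abs_of_nonneg ht0]; exact ht1
  have hB := Real.exp_bound habs (n := 9) (by norm_num)
  rw [abs_le] at hB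
  have hB1 := hB.1
  have habs9 : |(-(1/x))| ^ 9 * ((9:ℕ).succ / ((Nat.factorial 9 : ℝ) * 9)) = (1/x)^9 / 326592 := by
    rw [abs_neg, abs_of_nonneg ht0]
    norm_num [Nat.factorial]
    ring
  push_cast at hB1 habs9
  rw [habs9] at hB1
  have hsum9' : (∑ m ∈ Finset.range 9, (-(1/x))^m / (m.factorial : ℝ))
      = 1 - (1/x) + (1/x)^2/2 - (1/x)^3/6 + (1/x)^4/24 - (1/x)^5/120 + (1/x)^6/720
      - (1/x)^7/5040 + (1/x)^8/40320 := by
    simp [Finset.sum_range_succ, Nat.factorial]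
    ring
  rw [hsum9'] at hB1
  have hQle : 1 - (1/x) + (1/x)^2/2 - (1/x)^3/6 + (1/x)^4/24 - (1/x)^5/120 + (1/x)^6/720
      - (1/x)^7/5040 + (1/x)^8/40320 - (1/x)^9/326592 ≤ Real.exp (-(1/x)) := by linarith
  have hQ0 : 0 ≤ 1 - (1/x) + (1/x)^2/2 - (1/x)^3/6 + (1/x)^4/24 - (1/x)^5/120 + (1/x)^6/720
      - (1/x)^7/5040 + (1/x)^8/40320 - (1/x)^9/326592 := Q_nonneg (1/x) ht0 ht1
  -- square bound
  have hexp2 : Real.exp (-2/x) = Real.exp (-(1/x)) * Real.exp (-(1/x)) := by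
    rw [← Real.exp_add]
    congr 1
    ring
  have hsq : (1 - (1/x) + (1/x)^2/2 - (1/x)^3/6 + (1/x)^4/24 - (1/x)^5/120 + (1/x)^6/720
      - (1/x)^7/5040 + (1/x)^8/40320 - (1/x)^9/326592)^2 ≤ Real.exp (-2/x) := by
    rw [hexp2, pow_two]
    exact mul_le_mul hQle hQle hQ0 (Real.exp_nonneg _)
  have hmain := main_poly x hx
  have htri : tg (x+1) < trigamma (x+1) := by
    rw [trigamma]
    exact trigamma_gt_tg (x+1) (by linarith)
  linarith
end

section
/- For all real x > 0, the trigamma function satisfies ψ'(x+1) > 1/x − 1/(2x²) + 1/(6x³) − 1/(30x⁵). -/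
open Real

noncomputable def Gaux (y : ℝ) : ℝ := 1/y - 1/(2*y^2) + 1/(6*y^3) - 1/(30*y^5)

lemma Gaux_key (y : ℝ) (hy : 0 < y) :
    1/(y+1)^2 - (Gaux y - Gaux (y+1)) = (5*y^2 + 5*y + 1) / (30 * y^5 * (y+1)^5) := by
  have hy1 : (0:ℝ) < y + 1 := by linarith
  unfold Gaux
  field_simp
  ring

lemma Gaux_step (y : ℝ) (hy : 0 < y) : Gaux y - Gaux (y+1) < 1/(y+1)^2 := by
  have h := Gaux_key y hy
  have hpos : (0:ℝ) < (5*y^2 + 5*y + 1) / (30 * y^5 * (y+1)^5) := by positivity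
  linarith

lemma Gaux_tendsto : Filter.Tendsto Gaux Filter.atTop (nhds 0) := by
  have h0 : ∀ (c : ℝ) (k : ℕ), 0 < c → 0 < k →
      Filter.Tendsto (fun y : ℝ => 1/(c*y^k)) Filter.atTop (nhds 0) := by
    intro c k hc hk
    have h1 : Filter.Tendsto (fun y : ℝ => c*y^k) Filter.atTop Filter.atTop :=
      (Filter.tendsto_pow_atTop hk.ne').const_mul_atTop hc
    have h2 := tendsto_inv_atTop_zero.comp h1
    exact h2.congr fun y => (one_div _).symm
  have ha := h0 1 1 one_pos one_pos
  have hb := h0 2 2 two_pos two_pos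
  have hcc := h0 6 3 (by norm_num) (by norm_num)
  have hd := h0 30 5 (by norm_num) (by norm_num)
  have H := ((ha.sub hb).add hcc).sub hd
  norm_num at H
  exact H.congr fun y => by unfold Gaux; ring

theorem stmt_9 (x : ℝ) (hx : 0 < x) :
    trigamma (x + 1) > 1/x - 1/(2*x^2) + 1/(6*x^3) - 1/(30*x^5) := by
  have hx1 : (0:ℝ) < x + 1 := by linarith
  -- summability
  have hsum : Summable (fun n : ℕ => 1 / ((x+1) + (n:ℝ))^2) := by
    have hbase : Summable (fun n : ℕ => 1 / ((n:ℝ)+1)^2) := by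
      have := (summable_nat_add_iff 1).mpr (Real.summable_one_div_nat_pow.mpr one_lt_two)
      simpa [add_comm] using this
    refine Summable.of_nonneg_of_le (fun n => by positivity) (fun n => ?_) hbase
    have h1 : (0:ℝ) < (n:ℝ) + 1 := by positivity
    have h2 : ((n:ℝ)+1) ≤ (x+1) + (n:ℝ) := by linarith
    have := pow_le_pow_left₀ h1.le h2 2
    exact one_div_le_one_div_of_le (by positivity) this
  -- key lower bound for partial sums
  have key : ∀ N : ℕ, Gaux (x+1) - Gaux (x+1+N) + 1/(x+1)^2
      ≤ ∑ n ∈ Finset.range (N+1), 1 / ((x+1) + (n:ℝ))^2 := by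
    intro N
    induction N with
    | zero => simp
    | succ N ih =>
      rw [Finset.sum_range_succ]
      have hy : (0:ℝ) < x + 1 + N := by positivity
      have hstep := (Gaux_step (x+1+N) hy).le
      have hcast : (x+1) + ((N+1 : ℕ):ℝ) = (x+1+N) + 1 := by push_cast; ring
      rw [hcast]
      push_cast
      push_cast at ih
      linarith
  -- take limits
  have hT : Filter.Tendsto (fun N : ℕ => ∑ n ∈ Finset.range (N+1), 1 / ((x+1) + (n:ℝ))^2)
      Filter.atTop (nhds (trigamma (x+1))) := by
    have := hsum.hasSum.tendsto_sum_nat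
    exact this.comp (Filter.tendsto_add_atTop_nat 1)
  have hyN : Filter.Tendsto (fun N : ℕ => x + 1 + (N:ℝ)) Filter.atTop Filter.atTop :=
    Filter.tendsto_atTop_add_const_left _ _ tendsto_natCast_atTop_atTop
  have hGN : Filter.Tendsto (fun N : ℕ => Gaux (x+1) - Gaux (x+1+(N:ℝ)) + 1/(x+1)^2)
      Filter.atTop (nhds (Gaux (x+1) - 0 + 1/(x+1)^2)) :=
    (tendsto_const_nhds.sub (Gaux_tendsto.comp hyN)).add tendsto_const_nhds
  have hle : Gaux (x+1) - 0 + 1/(x+1)^2 ≤ trigamma (x+1) :=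
    le_of_tendsto_of_tendsto' hGN hT key
  have hfin : Gaux x < Gaux (x+1) + 1/(x+1)^2 := by
    have := Gaux_step x hx
    linarith
  have : Gaux x < trigamma (x+1) := by linarith
  simpa [Gaux] using this
end

section
/- For all real x > 0, the trigamma function satisfies 1/x + 1/(2x²) + 1/(6x³) − 1/(30x⁵) + 1/(42x⁷) − 1/(30x⁹) < ψ'(x) < 1/x + 1/(2x²) + 1/(6x³) − 1/(30x⁵) + 1/(42x⁷) − 1/(30x⁹) + 5/(66x¹¹). -/
/-!
The trigamma function and the truncations `A` of its asymptotic expansion both vanish at infinity,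
and `ψ'(x) - ψ'(x + 1) = 1 / x²`. Hence if `A(y) - A(y + 1) < 1 / y²` for all `y > 0`, the sequence
`ψ'(x + n) - A(x + n)` is strictly decreasing with limit `0`, so it is positive; the upper bound is
symmetric. The two one-step inequalities amount to the positivity of explicit rational functions.
-/

open Real

open Filter Topology

lemma summable_one_div_add_nat_sq (x : ℝ) : Summable fun n : ℕ => 1 / (x + n) ^ 2 :=
  ((Real.summable_one_div_nat_add_rpow x 2).2 one_lt_two).congr fun n => by
    rw [Real.rpow_two, sq_abs, add_comm]

lemma trigamma_sub_trigamma_add_one (x : ℝ) : trigamma x - trigamma (x + 1) = 1 / x ^ 2 := by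
  rw [trigamma, (summable_one_div_add_nat_sq x).tsum_eq_zero_add, trigamma]
  simp only [Nat.cast_zero, add_zero, Nat.cast_add, Nat.cast_one, add_assoc, add_comm (1 : ℝ)]
  ring

lemma tendsto_trigamma_add_nat (x : ℝ) :
    Tendsto (fun n : ℕ => trigamma (x + n)) atTop (𝓝 0) :=
  (tendsto_sum_nat_add fun k : ℕ => 1 / (x + k) ^ 2).congr fun n => by
    simp only [trigamma, Nat.cast_add, add_comm (n : ℝ), add_assoc]

lemma pos_of_strictAnti_of_tendsto_zero {g : ℕ → ℝ} (hg : StrictAnti g)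
    (hlim : Tendsto g atTop (𝓝 0)) (n : ℕ) : 0 < g n :=
  (hg.antitone.le_of_tendsto hlim (n + 1)).trans_lt (hg n.lt_succ_self)

lemma lt_of_sub_add_one_lt_of_tendsto {F G : ℝ → ℝ} {x : ℝ}
    (hlim : Tendsto (fun n : ℕ => G (x + n) - F (x + n)) atTop (𝓝 0))
    (hstep : ∀ n : ℕ, F (x + n) - F (x + n + 1) < G (x + n) - G (x + n + 1)) : F x < G x := by
  have hanti : StrictAnti fun n : ℕ => G (x + n) - F (x + n) :=
    strictAnti_nat_of_succ_lt fun n => by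
      simp only [Nat.cast_succ, ← add_assoc]
      linarith [hstep n]
  simpa using pos_of_strictAnti_of_tendsto_zero hanti hlim 0

noncomputable def trigammaApprox₉ (x : ℝ) : ℝ :=
  1/x + 1/(2*x^2) + 1/(6*x^3) - 1/(30*x^5) + 1/(42*x^7) - 1/(30*x^9)

noncomputable def trigammaApprox₁₁ (x : ℝ) : ℝ := trigammaApprox₉ x + 5/(66*x^11)

lemma tendsto_trigammaApprox₁₁ : Tendsto trigammaApprox₁₁ atTop (𝓝 0) := by
  have hq : Continuous fun t : ℝ =>
      t + t^2/2 + t^3/6 - t^5/30 + t^7/42 - t^9/30 + 5*t^11/66 := by fun_prop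
  convert (hq.tendsto 0).comp tendsto_inv_atTop_zero using 2
  · funext x
    simp only [trigammaApprox₁₁, trigammaApprox₉, Function.comp_apply]
    ring
  · norm_num

lemma tendsto_trigammaApprox₉ : Tendsto trigammaApprox₉ atTop (𝓝 0) := by
  have hq : Continuous fun t : ℝ =>
      t + t^2/2 + t^3/6 - t^5/30 + t^7/42 - t^9/30 := by fun_prop
  convert (hq.tendsto 0).comp tendsto_inv_atTop_zero using 2
  · funext x
    simp only [trigammaApprox₉, Function.comp_apply]
    ring
  · norm_num

lemma trigammaApprox₉_sub_lt {y : ℝ} (hy : 0 < y) :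
    trigammaApprox₉ y - trigammaApprox₉ (y + 1) < 1 / y ^ 2 := by
  have key : 1 / y ^ 2 - (trigammaApprox₉ y - trigammaApprox₉ (y + 1)) =
      (7 + 63*y + 247*y^2 + 543*y^3 + 709*y^4 + 525*y^5 + 175*y^6) /
      (210 * y ^ 9 * (y + 1) ^ 9) := by
    unfold trigammaApprox₉
    field_simp
    ring
  have : 0 < 1 / y ^ 2 - (trigammaApprox₉ y - trigammaApprox₉ (y + 1)) := by
    rw [key]
    positivity
  linarith

lemma lt_trigammaApprox₁₁_sub {y : ℝ} (hy : 0 < y) :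
    1 / y ^ 2 < trigammaApprox₁₁ y - trigammaApprox₁₁ (y + 1) := by
  have key : trigammaApprox₁₁ y - trigammaApprox₁₁ (y + 1) - 1 / y ^ 2 =
      (175 + 1925*y + 9548*y^2 + 28028*y^3 + 53570*y^4 + 68750*y^5 + 58388*y^6
        + 30404*y^7 + 7601*y^8) / (2310 * y ^ 11 * (y + 1) ^ 11) := by
    unfold trigammaApprox₁₁ trigammaApprox₉
    field_simp
    ring
  have : 0 < trigammaApprox₁₁ y - trigammaApprox₁₁ (y + 1) - 1 / y ^ 2 := by
    rw [key]
    positivity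
  linarith

theorem stmt_11 (x : ℝ) (hx : 0 < x) :
    1/x + 1/(2*x^2) + 1/(6*x^3) - 1/(30*x^5) + 1/(42*x^7) - 1/(30*x^9) < trigamma x ∧
    trigamma x < 1/x + 1/(2*x^2) + 1/(6*x^3) - 1/(30*x^5) + 1/(42*x^7) - 1/(30*x^9) + 5/(66*x^11) := by
  have hpos : ∀ n : ℕ, 0 < x + n := fun n => by positivity
  have hshift : Tendsto (fun n : ℕ => x + n) atTop atTop :=
    tendsto_atTop_add_const_left _ _ tendsto_natCast_atTop_atTop
  constructor
  · refine lt_of_sub_add_one_lt_of_tendsto (F := trigammaApprox₉) ?_ fun n => ?_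
    · simpa using (tendsto_trigamma_add_nat x).sub (tendsto_trigammaApprox₉.comp hshift)
    · rw [trigamma_sub_trigamma_add_one]
      exact trigammaApprox₉_sub_lt (hpos n)
  · refine lt_of_sub_add_one_lt_of_tendsto (G := trigammaApprox₁₁) ?_ fun n => ?_
    · simpa using (tendsto_trigammaApprox₁₁.comp hshift).sub (tendsto_trigamma_add_nat x)
    · rw [trigamma_sub_trigamma_add_one]
      exact lt_trigammaApprox₁₁_sub (hpos n)
end

section
/- For all real x ≥ 1, ln(x + 1/2 + 1/(90x³)) − 1/(120x⁴) − ln(x + π²/(6e^{2γ})) < 0, where γ is the Euler–Mascheroni constant. -/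
open Real

lemma gamma_lt : Real.eulerMascheroniConstant < 7/12 := by
  have h := Real.eulerMascheroniConstant_lt_eulerMascheroniSeq' 128
  have h2 : Real.eulerMascheroniSeq' 128 = (harmonic 128 : ℝ) - Real.log 128 := by
    simp [Real.eulerMascheroniSeq']
  have hH : (harmonic 128 : ℝ) < 54332/10000 := by
    have : harmonic 128 < 54332/10000 := by
      simp only [harmonic_succ, harmonic_zero]; norm_num
    push_cast at this ⊢
    convert this using 2 <;> norm_num
  have hlog : (4.852030262 : ℝ) < Real.log 128 := by
    have : (128:ℝ) = 2^7 := by norm_num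
    rw [this, Real.log_pow]
    have := Real.log_two_gt_d9
    push_cast
    linarith
  rw [h2] at h
  linarith

lemma my_exp_bound : Real.exp (2 * Real.eulerMascheroniConstant) < 3.2183 := by
  have h1 : Real.exp (2 * Real.eulerMascheroniConstant) < Real.exp (7/6) :=
    Real.exp_lt_exp.2 (by linarith [gamma_lt])
  have h2 : Real.exp (7/6) < 3.2183 := by
    have h6 : Real.exp (7/6) ^ (6:ℕ) < (3.2183:ℝ) ^ (6:ℕ) := by
      have e7 : Real.exp (7/6) ^ (6:ℕ) = Real.exp 1 ^ (7:ℕ) := by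
        rw [← Real.exp_nat_mul, ← Real.exp_nat_mul]; norm_num
      rw [e7]
      have h7 : Real.exp 1 ^ (7:ℕ) < (2.7182818286:ℝ) ^ (7:ℕ) := by
        have := Real.exp_one_lt_d9
        gcongr
      nlinarith [h7]
    exact lt_of_pow_lt_pow_left₀ 6 (by norm_num) h6
  linarith

theorem stmt_14 (x : ℝ) (hx : 1 ≤ x) :
    Real.log (x + 1/2 + 1/(90*x^3)) - 1/(120*x^4) -
      Real.log (x + Real.pi^2 / (6 * Real.exp (2 * Real.eulerMascheroniConstant))) < 0 := by
  have hx0 : (0:ℝ) < x := by linarith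
  have hc : (46/90 : ℝ) < Real.pi^2 / (6 * Real.exp (2 * Real.eulerMascheroniConstant)) := by
    have hpi : (3.141592 : ℝ) < Real.pi := Real.pi_gt_d6
    have hpi2 : (9.8696 : ℝ) < Real.pi ^ 2 := by nlinarith
    have he := my_exp_bound
    have hepos := Real.exp_pos (2 * Real.eulerMascheroniConstant)
    rw [lt_div_iff₀ (by positivity)]
    nlinarith
  have hx3 : 1/(90*x^3) ≤ 1/90 := by
    rw [div_le_div_iff₀ (by positivity) (by norm_num)]
    nlinarith [pow_le_pow_left₀ (by norm_num : (0:ℝ) ≤ 1) hx 3]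
  have hlt : x + 1/2 + 1/(90*x^3) <
      x + Real.pi^2 / (6 * Real.exp (2 * Real.eulerMascheroniConstant)) := by
    linarith
  have hlog := Real.log_lt_log (by positivity) hlt
  have hpos : (0:ℝ) < 1/(120*x^4) := by positivity
  linarith
end

section
/- For all real x ≥ 3, the function F₁(x) = ln(x + 1/2 + 1/(90x³) − 1/(60x⁴)) − 2(ln x + 1/(2x) − 1/(12x²) + 1/(240x⁴) − 1/(252x⁶)) − ln(1/x − 1/(2x²) + 1/(6x³) − 1/(30x⁵) + 1/(42x⁷) − 1/(30x⁹)) − 1/(120x⁴) is negative. -/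
set_option maxHeartbeats 4000000 in
theorem stmt_15 (x : ℝ) (hx : 3 ≤ x) :
    Real.log (x + 1/2 + 1/(90*x^3) - 1/(60*x^4))
      - 2 * (Real.log x + 1/(2*x) - 1/(12*x^2) + 1/(240*x^4) - 1/(252*x^6))
      - Real.log (1/x - 1/(2*x^2) + 1/(6*x^3) - 1/(30*x^5) + 1/(42*x^7) - 1/(30*x^9))
      - 1/(120*x^4) < 0 := by
  have hx0 : (0:ℝ) < x := by linarith
  set A : ℝ := x + 1/2 + 1/(90*x^3) - 1/(60*x^4) with hAdef
  set C : ℝ := 1/x - 1/(2*x^2) + 1/(6*x^3) - 1/(30*x^5) + 1/(42*x^7) - 1/(30*x^9) with hCdef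
  set P : ℝ := 1/x - 1/(6*x^2) + 1/(60*x^4) - 1/(126*x^6) with hPdef
  have hA0 : 0 < A := by
    have h1 : (1:ℝ)/(60*x^4) ≤ 1/2 := by
      rw [div_le_div_iff₀ (by positivity) (by norm_num)]
      nlinarith [pow_le_pow_left₀ (by norm_num : (0:ℝ) ≤ 3) hx 4]
    have h2 : (0:ℝ) < 1/(90*x^3) := by positivity
    have h3 : (0:ℝ) < x := hx0
    simp only [hAdef]; linarith
  have hCnum : (0:ℝ) < 630*x^8 - 315*x^7 + 105*x^6 - 21*x^4 + 15*x^2 - 21 := by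
    nlinarith [pow_pos hx0 7, pow_pos hx0 6, pow_pos hx0 4, pow_pos hx0 2,
      pow_le_pow_left₀ (by norm_num : (0:ℝ) ≤ 3) hx 4, pow_le_pow_left₀ (by norm_num : (0:ℝ) ≤ 3) hx 2]
  have hC0 : 0 < C := by
    have h : C = (630*x^8 - 315*x^7 + 105*x^6 - 21*x^4 + 15*x^2 - 21)/(630*x^9) := by
      rw [hCdef]; field_simp; ring
    rw [h]; exact div_pos hCnum (by positivity)
  have hP0 : 0 ≤ P := by
    have h : P = (2520*x^5 - 420*x^4 + 42*x^2 - 20)/(2520*x^6) := by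
      rw [hPdef]; field_simp; ring
    rw [h]
    have hn : (0:ℝ) < 2520*x^5 - 420*x^4 + 42*x^2 - 20 := by
      nlinarith [pow_pos hx0 4, pow_pos hx0 2, pow_le_pow_left₀ (by norm_num : (0:ℝ) ≤ 3) hx 2]
    positivity
  have hx2C : 0 < x^2 * C := by positivity
  have hkey : (0:ℝ) < 2151613053625501502668800000000000*x^56 + 11564920163237070576844800000000000*x^55 + -14932194592160980428521472000000000*x^54 + -20408049813637881752813568000000000*x^53 + -7126788664611614469477888000000000*x^52 + 225779291655832247526144000000000*x^51 + 287227861548229864846080000000000*x^50 + -321391122384813348526848000000000*x^49 + -12611917855381879018252800000000*x^48 + 155083504589632490819270400000000*x^47 + 63418376443640699050385760000000*x^46 + -2063876371658646449461200000000*x^45 + -3572996604112224630437040000000*x^44 + 2029662608578628501885400000000*x^43 + 638337449937690413720006400000*x^42 + -586012705571217370064320800000*x^41 + -287436658072969231600284000000*x^40 + 10123283680874327212704000000*x^39 + 19545505030939052506743360000*x^38 + -7470142638788186691460560000*x^37 + -3251377754788963457745360000*x^36 + 1504064665387667835937800000*x^35 + 825753516146864833825584000*x^34 + -32739094088661225492612000*x^33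 + -50349819267934451620236000*x^32 + 12792869879791407199668000*x^31 + 8703466359699794603067000*x^30 + -1670189371786829317025700*x^29 + -1760917835630835761701500*x^28 + -228767100980533157306250*x^27 + 194993440034280384052080*x^26 + 7766674554914812070415*x^25 + -35092041227700835130235*x^24 + -488438971221985141050*x^23 + 6634419995585004665553*x^22 + -89090128509685182180*x^21 + -711144498831898247235*x^20 + 101012660535126866400*x^19 + 91007784318552389883*x^18 + -23360768261925444000*x^17 + -8433798845287812570*x^16 + 2722097301434280000*x^15 + 508024686868246800*x^14 + -375885391266000000*x^13 + -8611493291352000*x^12 + 33584217408000000*x^11 + -1016196749820000*x^10 + -2418946740000000*x^9 + 453329104200000*x^8 + 139133400000000*x^7 + -37515968000000*x^6 + -7938000000000*x^5 + 2535820000000*x^4 + -137300000000*x^2 + 7000000000 := by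
    obtain ⟨z, rfl⟩ : ∃ z : ℝ, x = z^2 + 3 :=
      ⟨Real.sqrt (x - 3), by rw [Real.sq_sqrt (by linarith : (0:ℝ) ≤ x - 3)]; ring⟩
    have h : (0:ℝ) < 2151613053625501502668800000000000*z^112 + 373035913172321323025203200000000000*z^110 + 31714636555591406491740438528000000000*z^108 + 1762479008263390076205794131968000000000*z^106 + 72007932267921634656136142694912000000000*z^104 + 2306391889420684598350255382133504000000000*z^102 + 60308359288561549374388411498301952000000000*z^100 + 1323748739702795703419438564862523392000000000*z^98 + 24889750663177462074340095772723218931200000000*z^96 + 407100027120990555106343512727806690195200000000*z^94 + 5862355078351824859044468883658810128702560000000*z^92 + 75044406175567648353674923435763061395389680000000*z^90 + 860703851901751189605436691290703786121447360000000*z^88 + 8902339193209848391374693625303648403429400120000000*z^86 + 83490129440099944417275206756968623401307058046400000*z^84 + 713254853904369619982167963090820443488222797085600000*z^82 + 5572263411290273134691955260104504267912215868771200000*z^80 + 39943555916902392415783986809199963860818667956704000000*z^78 + 263470806330285569586659410579715507936197288993767360000*z^76 + 1603074478073822486951401630439391619956199987299556080000*z^74 + 9016153446739342849627232459271362837329919632274193600000*z^72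 + 46958203288597304119037442476006209551137528340173553000000*z^70 + 226819666891498811473723499932798621077888652330583955384000*z^68 + 1017367251687238477613130309569750129208360872852940322116000*z^66 + 4241828676001114941502318849914082194272202043585470354672000*z^64 + 16453812477482866813493797576401919476274510627531803957300000*z^62 + 59414530509649072906337232094554343818907096211834765873247000*z^60 + 199813729481665219980398628562406782566391737325698186774096300*z^58 + 626008772247706269135752836471988010995792657071389875544435600*z^56 + 1827248659642064701794877609481021494075633448978278137528355950*z^54 + 4968680767540172758412034758258807078605476289021567799079067230*z^52 + 12583418334981035504719590497700511864724155622156860333725920205*z^50 + 29667454760924394897069759757942957617765693696747755709171193140*z^48 + 65075169194134268370733617049053648789140865325531499760077925030*z^46 + 132692983309909229005158836585964367576235940151775778899586192363*z^44 + 251264911180418931664086923855920403884184088719819252015767965138*z^42 + 441288357546666010207586791321461482331950809703439479704309834302*z^40 + 717741047858175833412525272864029383721656403838251858240684021920*z^38 + 1079185814332422344010513085092619353964668589721792242089500494488*z^36 + 1496930683448501694531929072942875639637827044050930720888128174713*z^34 + 1910841083126440357606806113864823808362053051823856296892545886257*z^32 + 2238349016990082581215259509873691805945802979781432671343923128860*z^30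 + 2398094608680426359362342775511969841595660709374823235607716447050*z^28 + 2340709957468687388333043887443575708417005775830139410529864547392*z^26 + 2071955130639644562020182802262163276912107038526188065814382300600*z^24 + 1654268901975152346447760044862222395274975363934211927111784763646*z^22 + 1183605367333621211968993877277666104264456822487166904153962735482*z^20 + 752969341216413552601596072720268913329893281393737943121737232855*z^18 + 421834077436683455947195880467413299573687318844747313239650083866*z^16 + 205629483734436647854297266977655783753729693098243398476402682878*z^14 + 85889681523117484440252376728217326179434926435461499354251409691*z^12 + 30124339801890561644747220706262136087974001160385117172044488338*z^10 + 8628528748902351383283477236218550479616416123685825202612269890*z^8 + 1938289461638210196782827103478575475327930688431937692286396116*z^6 + 320240370896361273136314790527862740538825607199362477920579432*z^4 + 34601206087538174530673064962122748783223288215261072927122035*z^2 + 1834227821716648430161069327142960797674868988491383620680249 := by positivity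
    exact h.trans_le (le_of_eq (by ring))
  have hsum : A / (x^2 * C) < ∑ i ∈ Finset.range 10, P^i / (Nat.factorial i : ℝ) := by
    rw [div_lt_iff₀ hx2C, ← sub_pos]
    have heq : (∑ i ∈ Finset.range 10, P^i / (Nat.factorial i : ℝ)) * (x^2 * C) - A
        = (2151613053625501502668800000000000*x^56 + 11564920163237070576844800000000000*x^55 + -14932194592160980428521472000000000*x^54 + -20408049813637881752813568000000000*x^53 + -7126788664611614469477888000000000*x^52 + 225779291655832247526144000000000*x^51 + 287227861548229864846080000000000*x^50 + -321391122384813348526848000000000*x^49 + -12611917855381879018252800000000*x^48 + 155083504589632490819270400000000*x^47 + 63418376443640699050385760000000*x^46 + -2063876371658646449461200000000*x^45 + -3572996604112224630437040000000*x^44 + 2029662608578628501885400000000*x^43 + 638337449937690413720006400000*x^42 + -586012705571217370064320800000*x^41 + -287436658072969231600284000000*x^40 + 10123283680874327212704000000*x^39 + 19545505030939052506743360000*x^38 + -7470142638788186691460560000*x^37 + -3251377754788963457745360000*x^36 + 1504064665387667835937800000*x^35 + 825753516146864833825584000*x^34 + -32739094088661225492612000*x^33 + -50349819267934451620236000*x^32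 + 12792869879791407199668000*x^31 + 8703466359699794603067000*x^30 + -1670189371786829317025700*x^29 + -1760917835630835761701500*x^28 + -228767100980533157306250*x^27 + 194993440034280384052080*x^26 + 7766674554914812070415*x^25 + -35092041227700835130235*x^24 + -488438971221985141050*x^23 + 6634419995585004665553*x^22 + -89090128509685182180*x^21 + -711144498831898247235*x^20 + 101012660535126866400*x^19 + 91007784318552389883*x^18 + -23360768261925444000*x^17 + -8433798845287812570*x^16 + 2722097301434280000*x^15 + 508024686868246800*x^14 + -375885391266000000*x^13 + -8611493291352000*x^12 + 33584217408000000*x^11 + -1016196749820000*x^10 + -2418946740000000*x^9 + 453329104200000*x^8 + 139133400000000*x^7 + -37515968000000*x^6 + -7938000000000*x^5 + 2535820000000*x^4 + -137300000000*x^2 + 7000000000) / (609982300702829676006604800000000000 * x^61) := by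
      norm_num [Finset.sum_range_succ, Finset.sum_range_zero, Nat.factorial]
      rw [hPdef, hCdef, hAdef]
      push_cast
      field_simp
      ring
    rw [heq]
    exact div_pos hkey (by positivity)
  have hT0 : 0 < A / (x^2 * C) := div_pos hA0 hx2C
  have hlt : Real.log (A / (x^2 * C)) < P := by
    rw [Real.log_lt_iff_lt_exp hT0]
    exact lt_of_lt_of_le hsum (Real.sum_le_exp_of_nonneg hP0 10)
  have hlog : Real.log A - 2 * Real.log x - Real.log C = Real.log (A / (x^2 * C)) := by
    rw [Real.log_div hA0.ne' hx2C.ne', Real.log_mul (by positivity) hC0.ne',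
      Real.log_pow]
    push_cast; ring
  have hgoal : Real.log A
      - 2 * (Real.log x + 1/(2*x) - 1/(12*x^2) + 1/(240*x^4) - 1/(252*x^6))
      - Real.log C - 1/(120*x^4)
      = (Real.log A - 2 * Real.log x - Real.log C) - P := by
    rw [hPdef]; ring
  rw [hgoal, hlog]
  linarith [hlt]
end

section
/- For all real x ≥ 1, 1/(x+1) − ln(P(x)/(5040x⁷)) < 0, where P(x) = 5040x⁷ + 5040x⁶ − 2520x⁵ + 840x⁴ + 210x³ − 798x² + 1057x − 1. -/
open Real

-- `t^7/4410 = t^7 * 8 / (7! * 7)` is the remainder term of `Real.exp_bound'` at order 7.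
lemma exp_le_taylor_seven {t : ℝ} (h0 : 0 ≤ t) (h1 : t ≤ 1) :
    exp t ≤ 1 + t + t^2/2 + t^3/6 + t^4/24 + t^5/120 + t^6/720 + t^7/4410 := by
  refine (exp_bound' h0 h1 (n := 7) (by norm_num)).trans_eq ?_
  norm_num [Finset.sum_range_succ, Nat.factorial]
  ring

lemma taylor_seven_inv_succ_lt {x : ℝ} (hx : 1 ≤ x) :
    1 + 1/(x+1) + (1/(x+1))^2/2 + (1/(x+1))^3/6 + (1/(x+1))^4/24
        + (1/(x+1))^5/120 + (1/(x+1))^6/720 + (1/(x+1))^7/4410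
      < (5040*x^7 + 5040*x^6 - 2520*x^5 + 840*x^4 + 210*x^3 - 798*x^2 + 1057*x - 1)
          / (5040*x^7) := by
  have hx0 : 0 < x := by positivity
  rw [← sub_pos]
  field_simp
  ring_nf
  -- every coefficient is now positive except the constant term, which the linear term beats
  linarith [pow_pos hx0 2, pow_pos hx0 3, pow_pos hx0 4, pow_pos hx0 5, pow_pos hx0 6,
    pow_pos hx0 7]

theorem stmt_17 (x : ℝ) (hx : 1 ≤ x) :
    1/(x+1) - Real.log ((5040*x^7 + 5040*x^6 - 2520*x^5 + 840*x^4 + 210*x^3 - 798*x^2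
      + 1057*x - 1) / (5040*x^7)) < 0 := by
  have ht1 : 1/(x+1) ≤ 1 := by rw [div_le_one (by positivity)]; linarith
  have hexp := (exp_le_taylor_seven (by positivity) ht1).trans_lt (taylor_seven_inv_succ_lt hx)
  rw [sub_neg, lt_log_iff_exp_lt ((exp_pos _).trans hexp)]
  exact hexp
end

section
/- For all real x > 0, ψ'(x+1) < e^{1/(x+1)} − 1, where ψ' is the trigamma function. -/
open Real

/-!
Each term of the trigamma series is beaten by a step of a telescoping series:
`1 / t ^ 2 < exp (1 / t) - exp (1 / (t + 1))` for `t > 0`. Writing `1 / t = s + d` with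
`s = 1 / (t + 1)` and `d = 1 / (t (t + 1))`, the right side is `exp s * (exp d - 1)`, and the
second-order Taylor bounds for `exp s` and `exp d` already exceed `1 / t ^ 2` by
`1 / (4 t ^ 2 (t + 1) ^ 4)`. Summing over `t = x + 1 + n` telescopes to `exp (1 / (x + 1)) - 1`.
-/

open Filter Topology

lemma quadratic_mul_quadratic_le_exp_add_sub_exp {s d : ℝ} (hs : 0 ≤ s) (hd : 0 ≤ d) :
    (1 + s + s ^ 2 / 2) * (d + d ^ 2 / 2) ≤ exp (s + d) - exp s := by
  have hexp_d : d + d ^ 2 / 2 ≤ exp d - 1 := by linarith [quadratic_le_exp_of_nonneg hd]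
  calc (1 + s + s ^ 2 / 2) * (d + d ^ 2 / 2) ≤ exp s * (exp d - 1) :=
        mul_le_mul (quadratic_le_exp_of_nonneg hs) hexp_d (by positivity) (exp_pos s).le
    _ = exp (s + d) - exp s := by rw [exp_add]; ring

lemma one_div_sq_lt_exp_one_div_sub_exp_one_div_add_one {t : ℝ} (ht : 0 < t) :
    1 / t ^ 2 < exp (1 / t) - exp (1 / (t + 1)) := by
  have hsplit : 1 / t = 1 / (t + 1) + 1 / (t * (t + 1)) := by field_simp
  have hgap : (1 + 1 / (t + 1) + (1 / (t + 1)) ^ 2 / 2) *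
      (1 / (t * (t + 1)) + (1 / (t * (t + 1))) ^ 2 / 2) =
        1 / t ^ 2 + 1 / (4 * t ^ 2 * (t + 1) ^ 4) := by
    field_simp; ring
  have hbound := quadratic_mul_quadratic_le_exp_add_sub_exp
    (s := 1 / (t + 1)) (d := 1 / (t * (t + 1))) (by positivity) (by positivity)
  rw [← hsplit, hgap] at hbound
  have : 0 < 1 / (4 * t ^ 2 * (t + 1) ^ 4) := by positivity
  linarith

lemma hasSum_sub_succ_of_tendsto {f : ℕ → ℝ} {a : ℝ} (hf : ∀ n, f (n + 1) ≤ f n)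
    (h : Tendsto f atTop (𝓝 a)) : HasSum (fun n => f n - f (n + 1)) (f 0 - a) := by
  rw [hasSum_iff_tendsto_nat_of_nonneg (fun n => sub_nonneg.2 (hf n))]
  simp_rw [Finset.sum_range_sub']
  exact h.const_sub (f 0)

theorem stmt_19 (x : ℝ) (hx : 0 < x) :
    trigamma (x + 1) < Real.exp (1/(x+1)) - 1 := by
  set f : ℕ → ℝ := fun n => exp (1 / (x + 1 + n)) with hf
  have hterm : ∀ n : ℕ, 1 / (x + 1 + n) ^ 2 < f n - f (n + 1) := fun n => by
    simpa [hf, add_assoc] using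
      one_div_sq_lt_exp_one_div_sub_exp_one_div_add_one (t := x + 1 + n) (by positivity)
  have hlim : Tendsto f atTop (𝓝 1) := by
    rw [← exp_zero]
    refine (continuous_exp.tendsto 0).comp ?_
    simpa [Pi.inv_def] using
      (tendsto_atTop_add_const_left _ (x + 1) tendsto_natCast_atTop_atTop).inv_tendsto_atTop
  have htelescope : HasSum (fun n => f n - f (n + 1)) (exp (1 / (x + 1)) - 1) := by
    have hanti : ∀ n, f (n + 1) ≤ f n := fun n => by
      have : 0 < 1 / (x + 1 + n) ^ 2 := by positivity
      linarith [hterm n]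
    simpa [hf] using hasSum_sub_succ_of_tendsto hanti hlim
  calc trigamma (x + 1) = ∑' n : ℕ, 1 / (x + 1 + n) ^ 2 := rfl
    _ < ∑' n : ℕ, (f n - f (n + 1)) :=
        Summable.tsum_lt_tsum_of_nonneg (i := 0) (fun n => by positivity) (fun n => (hterm n).le)
          (hterm 0) htelescope.summable
    _ = exp (1 / (x + 1)) - 1 := htelescope.tsum_eq
end
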